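/- Let r > 2 and let X, Y be Banach function spaces over measure spaces, both exactly r-convex, with Y having strictly monotone norm. Then every linear isometry T : X → Y preserves disjointness: if |x| ⊓ |y| = 0 in X then |Tx| ⊓ |Ty| = 0 in Y. -/

import Mathlib

/-!
Suppose `x` and `y` are disjoint while `Tx` and `Ty` are both nonzero at some point.
On the `X` side, disjointness gives `|x + t y|^r = (1 - t^r)|x|^r + t^r |x + y|^r` pointwise,
so exact `r`-convexity yields `‖x + t y‖^r ≤ ‖x‖^r + t^r ‖x + y‖^r`.
On the `Y` side, `‖Tx + t Ty‖ = ‖Tx - t Ty‖ = ‖x + t y‖`, and exact `r`-convexity together with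
the power-mean inequality for `r ≥ 2` bounds `‖(|Tx|² + t²|Ty|²)^{1/2}‖` by `‖x + t y‖`.
Strict monotonicity of the norm of `Y` turns the pointwise second-order gain of the square root
into `‖x + t y‖ ≥ ‖x‖ + κ t²` with `κ > 0`.
Since `r > 2`, the two estimates are incompatible for small `t`.
-/

open Real Set Filter Topology

lemma min_abs_abs_eq_zero_iff {a b : ℝ} : min |a| |b| = 0 ↔ a = 0 ∨ b = 0 := by
  rcases le_total |a| |b| with h | h <;> simp [h] <;> aesop

/-- A lower bound for `(√(U ^ 2 + t ^ 2 * V ^ 2) - |U|) / t ^ 2` valid uniformly for `t ∈ [0, 1]`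
(at `U = 0` it is `0`, since `V ^ 2 / 0 = 0`). -/
noncomputable def quadGain (U V : ℝ) : ℝ := min |U| (V ^ 2 / (3 * |U|))

lemma quadGain_nonneg (U V : ℝ) : 0 ≤ quadGain U V :=
  le_min (abs_nonneg U) (by positivity)

lemma quadGain_le_abs (U V : ℝ) : quadGain U V ≤ |U| := min_le_left _ _

lemma quadGain_pos {U V : ℝ} (hU : U ≠ 0) (hV : V ≠ 0) : 0 < quadGain U V :=
  lt_min (abs_pos.2 hU) (by positivity)

lemma three_mul_abs_mul_quadGain_le (U V : ℝ) : 3 * |U| * quadGain U V ≤ V ^ 2 := by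
  rcases eq_or_ne U 0 with rfl | hU
  · simp [sq_nonneg]
  · calc 3 * |U| * quadGain U V ≤ 3 * |U| * (V ^ 2 / (3 * |U|)) := by
          gcongr; exact min_le_right _ _
      _ = V ^ 2 := by field_simp

lemma abs_add_sq_mul_quadGain_le_sqrt {t : ℝ} (ht0 : 0 ≤ t) (ht1 : t ≤ 1) (U V : ℝ) :
    |U| + t ^ 2 * quadGain U V ≤ √(U ^ 2 + (t * V) ^ 2) := by
  have hh := quadGain_nonneg U V
  have hsq : t ^ 2 * quadGain U V ≤ |U| :=
    (mul_le_of_le_one_left hh (pow_le_one₀ ht0 ht1)).trans (quadGain_le_abs U V)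
  rw [Real.le_sqrt (by positivity) (by positivity)]
  nlinarith [sq_abs U, three_mul_abs_mul_quadGain_le U V, sq_nonneg t,
    mul_le_mul_of_nonneg_left hsq (by positivity : 0 ≤ t ^ 2 * quadGain U V)]

lemma two_mul_rpow_rpow_inv {r s : ℝ} (hr : r ≠ 0) (hs : 0 ≤ s) :
    (2 * s ^ r) ^ r⁻¹ = 2 ^ r⁻¹ * s := by
  rw [mul_rpow zero_le_two (rpow_nonneg hs r), rpow_rpow_inv hs hr]

lemma two_mul_sqrt_rpow_le {r : ℝ} (hr : 2 ≤ r) (a b : ℝ) :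
    2 * √(a ^ 2 + b ^ 2) ^ r ≤ |a + b| ^ r + |a - b| ^ r := by
  have hsq : ∀ z : ℝ, (z ^ 2) ^ (r / 2) = |z| ^ r := fun z => by
    rw [rpow_div_two_eq_sqrt r (sq_nonneg z), sqrt_sq_eq_abs]
  have hconv := (convexOn_rpow (by linarith : (1 : ℝ) ≤ r / 2)).2
    (sq_nonneg (a + b)) (sq_nonneg (a - b)) (by norm_num : (0 : ℝ) ≤ 1 / 2)
    (by norm_num : (0 : ℝ) ≤ 1 / 2) (by norm_num)
  have hmid : 1 / 2 * (a + b) ^ 2 + 1 / 2 * (a - b) ^ 2 = a ^ 2 + b ^ 2 := by ring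
  simp only [smul_eq_mul] at hconv
  rw [hmid, hsq, hsq, rpow_div_two_eq_sqrt r (by positivity)] at hconv
  linarith

lemma two_rpow_inv_mul_sqrt_sq_add_sq_le {r : ℝ} (hr : 2 ≤ r) (a b : ℝ) :
    2 ^ r⁻¹ * √(a ^ 2 + b ^ 2) ≤ (|a + b| ^ r + |a - b| ^ r) ^ r⁻¹ := by
  rw [← two_mul_rpow_rpow_inv (by positivity) (sqrt_nonneg _)]
  exact rpow_le_rpow (by positivity) (two_mul_sqrt_rpow_le hr a b) (by positivity)

lemma abs_add_mul_rpow_of_disjoint {r a b t : ℝ} (hr : r ≠ 0) (hab : a = 0 ∨ b = 0)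
    (ht : 0 ≤ t) : |a + t * b| ^ r = (1 - t ^ r) * |a| ^ r + t ^ r * |a + b| ^ r := by
  rcases hab with rfl | rfl
  · simp [abs_mul, abs_of_nonneg ht, mul_rpow ht (abs_nonneg b), zero_rpow hr]
  · simp only [mul_zero, add_zero]; ring

lemma nonpos_of_forall_mul_sq_le_mul_rpow {κ c r : ℝ} (hr : 2 < r)
    (h : ∀ t ∈ Ioc (0 : ℝ) 1, κ * t ^ 2 ≤ c * t ^ r) : κ ≤ 0 := by
  have hlim : Tendsto (fun t : ℝ => c * t ^ (r - 2)) (𝓝[>] 0) (𝓝 0) := by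
    have := ((continuousAt_rpow_const 0 (r - 2) (Or.inr (by linarith))).const_mul c).tendsto
    rw [zero_rpow (by linarith), mul_zero] at this
    exact this.mono_left nhdsWithin_le_nhds
  refine ge_of_tendsto hlim ?_
  filter_upwards [Ioc_mem_nhdsGT zero_lt_one] with t ht
  have hsplit : t ^ r = t ^ (r - 2) * t ^ 2 := by
    rw [← rpow_natCast, ← rpow_add ht.1]; norm_num
  have := h t ht
  rw [hsplit, ← mul_assoc] at this
  exact le_of_mul_le_mul_right this (by have := ht.1; positivity)

lemma rpow_add_mul_rpow_sub_one_mul_le {A d r : ℝ} (hA : 0 < A) (hd : 0 ≤ d) (hr : 1 ≤ r) :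
    A ^ r + r * A ^ (r - 1) * d ≤ (A + d) ^ r := by
  have hbern := one_add_mul_self_le_rpow_one_add (by linarith [div_nonneg hd hA.le] : -1 ≤ d / A) hr
  calc A ^ r + r * A ^ (r - 1) * d = A ^ r * (1 + r * (d / A)) := by
        rw [rpow_sub_one hA.ne']; field_simp
    _ ≤ A ^ r * (1 + d / A) ^ r := by gcongr
    _ = (A + d) ^ r := by rw [← mul_rpow hA.le (by positivity)]; field_simp

lemma nonpos_of_forall_add_mul_sq_rpow_le {A κ c r : ℝ} (hr : 2 < r) (hA : 0 < A)
    (h : ∀ t ∈ Ioc (0 : ℝ) 1, (A + κ * t ^ 2) ^ r ≤ A ^ r + c * t ^ r) : κ ≤ 0 := by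
  by_contra! hκ
  have hr0 : 0 < r := by linarith
  have hκ' : 0 < r * A ^ (r - 1) * κ := by positivity
  refine hκ'.not_ge (nonpos_of_forall_mul_sq_le_mul_rpow (c := c) hr fun t ht => ?_)
  have := rpow_add_mul_rpow_sub_one_mul_le (r := r) hA (by positivity : 0 ≤ κ * t ^ 2)
    (by linarith)
  linarith [h t ht]

section FunctionSpace

variable {α : Type*}

def IsLatticeMonotone (N : (α → ℝ) → ℝ) : Prop :=
  ∀ f g : α → ℝ, (∀ a, |f a| ≤ |g a|) → N f ≤ N g

def IsExactlyRConvex (r : ℝ) (X : Submodule ℝ (α → ℝ)) (N : (α → ℝ) → ℝ) : Prop :=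
  ∀ x ∈ X, ∀ y ∈ X, N (fun a => (|x a| ^ r + |y a| ^ r) ^ r⁻¹) ≤ (N x ^ r + N y ^ r) ^ r⁻¹

variable {N : (α → ℝ) → ℝ}

lemma IsLatticeMonotone.eq_of_abs_eq (hN : IsLatticeMonotone N) {f g : α → ℝ}
    (h : ∀ a, |f a| = |g a|) : N f = N g :=
  le_antisymm (hN f g fun a => (h a).le) (hN g f fun a => (h a).ge)

lemma IsLatticeMonotone.lt_of_le_of_ne (hN : IsLatticeMonotone N)
    (hstrict : ∀ u v : α → ℝ, (∀ a, 0 ≤ u a) → (∀ a, u a ≤ v a) → N u = N v → u = v)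
    {f g : α → ℝ} (hg : ∀ a, 0 ≤ g a) (hgf : ∀ a, g a ≤ f a) {a₀ : α} (hne : g a₀ ≠ f a₀) :
    N g < N f := by
  refine (hN g f fun a => ?_).lt_of_ne fun h => hne (congrFun (hstrict g f hg hgf h) a₀)
  rw [abs_of_nonneg (hg a), abs_of_nonneg ((hg a).trans (hgf a))]
  exact hgf a

lemma IsLatticeMonotone.sub_quadGain_lt (hN : IsLatticeMonotone N)
    (hstrict : ∀ u v : α → ℝ, (∀ a, 0 ≤ u a) → (∀ a, u a ≤ v a) → N u = N v → u = v)
    {u v : α → ℝ} {a₀ : α} (hu : u a₀ ≠ 0) (hv : v a₀ ≠ 0) :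
    N (|u| - fun a => quadGain (u a) (v a)) < N |u| := by
  refine hN.lt_of_le_of_ne hstrict (a₀ := a₀) (fun a => ?_) (fun a => ?_) ?_ <;>
    simp only [Pi.sub_apply, Pi.abs_apply]
  · linarith [quadGain_le_abs (u a) (v a)]
  · linarith [quadGain_nonneg (u a) (v a)]
  · linarith [quadGain_pos hu hv]

lemma one_add_mul_le_add_smul_add_mul_sub (hadd : ∀ f g : α → ℝ, N (f + g) ≤ N f + N g)
    (hhom : ∀ (c : ℝ) (f : α → ℝ), N (c • f) = |c| * N f) {s : ℝ} (hs : 0 ≤ s)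
    (f g : α → ℝ) : (1 + s) * N f ≤ N (f + s • g) + s * N (f - g) := by
  have hsplit : (1 + s) • f = (f + s • g) + s • (f - g) := by
    rw [smul_sub, add_smul, one_smul]; abel
  calc (1 + s) * N f = N ((1 + s) • f) := by rw [hhom, abs_of_nonneg (by linarith)]
    _ ≤ N (f + s • g) + N (s • (f - g)) := hsplit ▸ hadd _ _
    _ = N (f + s • g) + s * N (f - g) := by rw [hhom, abs_of_nonneg hs]

variable {r : ℝ} {X : Submodule ℝ (α → ℝ)}

lemma IsExactlyRConvex.two_rpow_inv_mul_sqrt_le (hX : IsExactlyRConvex r X N) (hr : 2 ≤ r)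
    (hmono : IsLatticeMonotone N) (hhom : ∀ (c : ℝ) (f : α → ℝ), N (c • f) = |c| * N f)
    {u v : α → ℝ} (hu : u ∈ X) (hv : v ∈ X) :
    2 ^ r⁻¹ * N (fun a => √(u a ^ 2 + v a ^ 2)) ≤ (N (u + v) ^ r + N (u - v) ^ r) ^ r⁻¹ := by
  calc 2 ^ r⁻¹ * N (fun a => √(u a ^ 2 + v a ^ 2))
      = N ((2 : ℝ) ^ r⁻¹ • fun a => √(u a ^ 2 + v a ^ 2)) := by
        rw [hhom, abs_of_pos (by positivity)]
    _ ≤ N (fun a => (|(u + v) a| ^ r + |(u - v) a| ^ r) ^ r⁻¹) := hmono _ _ fun a => by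
        simp only [Pi.smul_apply, smul_eq_mul]
        rw [abs_of_nonneg (by positivity), abs_of_nonneg (by positivity)]
        exact two_rpow_inv_mul_sqrt_sq_add_sq_le hr (u a) (v a)
    _ ≤ _ := hX _ (X.add_mem hu hv) _ (X.sub_mem hu hv)

lemma IsExactlyRConvex.add_mul_sq_le (hX : IsExactlyRConvex r X N) (hr : 2 ≤ r)
    (hnonneg : ∀ f : α → ℝ, 0 ≤ N f) (hmono : IsLatticeMonotone N)
    (hhom : ∀ (c : ℝ) (f : α → ℝ), N (c • f) = |c| * N f)
    (hadd : ∀ f g : α → ℝ, N (f + g) ≤ N f + N g) {u v : α → ℝ} (hu : u ∈ X) (hv : v ∈ X)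
    {t : ℝ} (ht0 : 0 ≤ t) (ht1 : t ≤ 1) (hsym : N (u - t • v) = N (u + t • v)) :
    N |u| + (N |u| - N (|u| - fun a => quadGain (u a) (v a))) * t ^ 2 ≤ N (u + t • v) := by
  have hsqrt : N (fun a => √(u a ^ 2 + (t • v) a ^ 2)) ≤ N (u + t • v) := by
    have := hX.two_rpow_inv_mul_sqrt_le hr hmono hhom hu (X.smul_mem t hv)
    rwa [hsym, ← two_mul, two_mul_rpow_rpow_inv (by positivity) (hnonneg _),
      mul_le_mul_iff_right₀ (by positivity)] at this
  have hgain : N (|u| + t ^ 2 • fun a => quadGain (u a) (v a)) ≤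
      N (fun a => √(u a ^ 2 + (t • v) a ^ 2)) := hmono _ _ fun a => by
    have := quadGain_nonneg (u a) (v a)
    rw [abs_of_nonneg (by simp only [Pi.add_apply, Pi.smul_apply, Pi.abs_apply]; positivity),
      abs_of_nonneg (sqrt_nonneg _)]
    exact abs_add_sq_mul_quadGain_le_sqrt ht0 ht1 (u a) (v a)
  have := one_add_mul_le_add_smul_add_mul_sub hadd hhom (sq_nonneg t) |u|
    fun a => quadGain (u a) (v a)
  linarith

lemma IsExactlyRConvex.rpow_add_smul_le_of_disjoint (hX : IsExactlyRConvex r X N) (hr : 0 < r)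
    (hnonneg : ∀ f : α → ℝ, 0 ≤ N f) (hmono : IsLatticeMonotone N)
    (hhom : ∀ (c : ℝ) (f : α → ℝ), N (c • f) = |c| * N f) {x y : α → ℝ} (hx : x ∈ X)
    (hy : y ∈ X) (hdisj : ∀ a, x a = 0 ∨ y a = 0) {t : ℝ} (ht0 : 0 ≤ t) (ht1 : t ≤ 1) :
    N (x + t • y) ^ r ≤ (1 - t ^ r) * N x ^ r + t ^ r * N (x + y) ^ r := by
  have htr : 0 ≤ 1 - t ^ r := sub_nonneg.2 (rpow_le_one ht0 ht1 hr.le)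
  set l := (1 - t ^ r) ^ r⁻¹
  have hl : 0 ≤ l := rpow_nonneg htr _
  have hlr : l ^ r = 1 - t ^ r := rpow_inv_rpow htr hr.ne'
  have hpt : ∀ a, |(x + t • y) a| ≤
      |(fun a => (|(l • x) a| ^ r + |(t • (x + y)) a| ^ r) ^ r⁻¹) a| := fun a => by
    simp only [Pi.add_apply, Pi.smul_apply, smul_eq_mul, abs_mul, abs_of_nonneg hl,
      abs_of_nonneg ht0, mul_rpow hl (abs_nonneg _), mul_rpow ht0 (abs_nonneg _), hlr,
      ← abs_add_mul_rpow_of_disjoint hr.ne' (hdisj a) ht0, rpow_rpow_inv (abs_nonneg _) hr.ne',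
      abs_abs, le_refl]
  have := (hmono _ _ hpt).trans (hX _ (X.smul_mem l hx) _ (X.smul_mem t (X.add_mem hx hy)))
  have hrhs : 0 ≤ (1 - t ^ r) * N x ^ r + t ^ r * N (x + y) ^ r :=
    add_nonneg (mul_nonneg htr (rpow_nonneg (hnonneg _) _))
      (mul_nonneg (rpow_nonneg ht0 _) (rpow_nonneg (hnonneg _) _))
  rwa [hhom, hhom, abs_of_nonneg hl, abs_of_nonneg ht0, mul_rpow hl (hnonneg _),
    mul_rpow ht0 (hnonneg _), hlr, le_rpow_inv_iff_of_pos (hnonneg _) hrhs hr] at this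

end FunctionSpace

/-- Every linear isometry from an exactly `r`-convex Banach function space (`r > 2`)
into an exactly `r`-convex Banach function space with strictly monotone norm
preserves disjointness. -/
theorem stmt13 {α β : Type*} (X : Submodule ℝ (α → ℝ)) (Y : Submodule ℝ (β → ℝ))
    (nX : (α → ℝ) → ℝ) (nY : (β → ℝ) → ℝ) (r : ℝ) (hr : 2 < r)
    (hXnonneg : ∀ f : α → ℝ, 0 ≤ nX f)
    (hXmono : ∀ f g : α → ℝ, (∀ a, |f a| ≤ |g a|) → nX f ≤ nX g)
    (hXhom : ∀ (c : ℝ) (f : α → ℝ), nX (c • f) = |c| * nX f)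
    (hXconv : ∀ x ∈ X, ∀ y ∈ X,
      nX (fun a => (|x a| ^ r + |y a| ^ r) ^ r⁻¹) ≤ (nX x ^ r + nX y ^ r) ^ r⁻¹)
    (hYnonneg : ∀ f : β → ℝ, 0 ≤ nY f)
    (hYmono : ∀ f g : β → ℝ, (∀ b, |f b| ≤ |g b|) → nY f ≤ nY g)
    (hYhom : ∀ (c : ℝ) (f : β → ℝ), nY (c • f) = |c| * nY f)
    (hYadd : ∀ f g : β → ℝ, nY (f + g) ≤ nY f + nY g)
    (hYstrict : ∀ u v : β → ℝ, (∀ b, 0 ≤ u b) → (∀ b, u b ≤ v b) → nY u = nY v → u = v)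
    (hYconv : ∀ x ∈ Y, ∀ y ∈ Y,
      nY (fun b => (|x b| ^ r + |y b| ^ r) ^ r⁻¹) ≤ (nY x ^ r + nY y ^ r) ^ r⁻¹)
    (T : (α → ℝ) → (β → ℝ))
    (hTmem : ∀ x ∈ X, T x ∈ Y)
    (hTadd : ∀ x ∈ X, ∀ y ∈ X, T (x + y) = T x + T y)
    (hTsmul : ∀ (c : ℝ), ∀ x ∈ X, T (c • x) = c • T x)
    (hTiso : ∀ x ∈ X, nY (T x) = nX x) :
    ∀ x ∈ X, ∀ y ∈ X, (∀ a, min |x a| |y a| = 0) → ∀ b, min |T x b| |T y b| = 0 := by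
  intro x hx y hy hxy b₀
  by_contra hb₀
  obtain ⟨hu₀, hv₀⟩ : T x b₀ ≠ 0 ∧ T y b₀ ≠ 0 := by
    simpa only [min_abs_abs_eq_zero_iff, not_or] using hb₀
  have hdisj (a : α) : x a = 0 ∨ y a = 0 := min_abs_abs_eq_zero_iff.1 (hxy a)
  set g : β → ℝ := fun b => quadGain (T x b) (T y b)
  have hκ : 0 < nY |T x| - nY (|T x| - g) :=
    sub_pos.2 (IsLatticeMonotone.sub_quadGain_lt hYmono hYstrict hu₀ hv₀)
  have hA : 0 < nY |T x| := by linarith [hYnonneg (|T x| - g)]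
  have hTx : nY |T x| = nX x :=
    (IsLatticeMonotone.eq_of_abs_eq hYmono fun b => by simp).trans (hTiso x hx)
  have hT (t : ℝ) : nY (T x + t • T y) = nX (x + t • y) := by
    have hty := X.smul_mem t hy
    rw [← hTsmul t y hy, ← hTadd x hx _ hty, hTiso _ (X.add_mem hx hty)]
  have hsym (t : ℝ) : nY (T x - t • T y) = nY (T x + t • T y) := by
    rw [sub_eq_add_neg, ← neg_smul, hT, hT]
    exact IsLatticeMonotone.eq_of_abs_eq hXmono fun a => by rcases hdisj a with h | h <;> simp [h]
  refine hκ.not_ge (nonpos_of_forall_add_mul_sq_rpow_le (c := nX (x + y) ^ r) hr hA fun t ht => ?_)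
  have hlower := IsExactlyRConvex.add_mul_sq_le hYconv hr.le hYnonneg hYmono hYhom hYadd
    (hTmem x hx) (hTmem y hy) ht.1.le ht.2 (hsym t)
  have hupper := IsExactlyRConvex.rpow_add_smul_le_of_disjoint hXconv (by linarith) hXnonneg
    hXmono hXhom hx hy hdisj ht.1.le ht.2
  rw [hT] at hlower
  calc (nY |T x| + (nY |T x| - nY (|T x| - g)) * t ^ 2) ^ r ≤ nX (x + t • y) ^ r :=
        rpow_le_rpow (by positivity) hlower (by linarith)
    _ ≤ _ := hupper
    _ ≤ nY |T x| ^ r + nX (x + y) ^ r * t ^ r := by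
        rw [hTx]
        linarith [mul_nonneg (rpow_nonneg ht.1.le r) (rpow_nonneg (hXnonneg x) r)]
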